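/- Under the observer error dynamics ė_v = e_v × ω + e_γ − K e_v, ė_γ = e_γ × ω − L e_γ, ė_β = e_β × ω − M e_β with ω continuous and the symmetric parts of K, L, M positive definite, the equilibrium (0,0,0) is globally exponentially stable: there exist constants c, λ > 0 independent of ω such that |(e_v, e_γ, e_β)(t)| ≤ c e^{−λ(t−t₀)} |(e_v, e_γ, e_β)(t₀)|. -/

import Mathlib

/-!
The rotation terms drop out of the energy balance: `e · (e × ω) = 0`, so `d/dt |e|²` does not
see `ω`. For the Lyapunov function `V = |e_v|² + μ |e_γ|² + |e_β|²` the dissipation of `K`, `L`,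
`M` is then bounded below by coercivity constants `α_K, α_L, α_M` of their symmetric parts, and
the coupling term `2 e_v · e_γ` is absorbed by Young's inequality once `μ α_K α_L ≥ 1`. This gives
`V' ≤ -λ V` with `λ = min α_K α_L α_M`, hence exponential decay of `V` by Grönwall, and `V` is
comparable to `|e|²` with constants `1` and `μ`.
-/

open Matrix
open scoped Matrix

section

variable {n : Type*} [Fintype n]

lemma dotProduct_self_nonneg (v : n → ℝ) : 0 ≤ v ⬝ᵥ v :=
  Finset.sum_nonneg fun i _ => mul_self_nonneg (v i)

lemma two_mul_dotProduct_le {ε : ℝ} (hε : 0 < ε) (v w : n → ℝ) :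
    2 * (v ⬝ᵥ w) ≤ ε * (v ⬝ᵥ v) + ε⁻¹ * (w ⬝ᵥ w) := by
  have h := dotProduct_self_nonneg (ε • v - w)
  simp only [sub_dotProduct, dotProduct_sub, smul_dotProduct, dotProduct_smul, smul_eq_mul,
    dotProduct_comm w v] at h
  rw [← mul_le_mul_iff_of_pos_left hε]
  field_simp
  linarith

lemma dotProduct_mulVec_symmPart (K : Matrix n n ℝ) (x : n → ℝ) :
    x ⬝ᵥ ((1 / 2 : ℝ) • (K + Kᵀ)) *ᵥ x = x ⬝ᵥ K *ᵥ x := by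
  rw [smul_mulVec, dotProduct_smul, add_mulVec, dotProduct_add, dotProduct_mulVec x Kᵀ,
    vecMul_transpose, dotProduct_comm, smul_eq_mul]
  ring

/-- The minimum of the quadratic form on the Euclidean unit sphere is a coercivity constant. -/
theorem Matrix.PosDef.exists_pos_mul_dotProduct_self_le {S : Matrix n n ℝ} (hS : S.PosDef) :
    ∃ α > 0, ∀ x : n → ℝ, α * (x ⬝ᵥ x) ≤ x ⬝ᵥ S *ᵥ x := by
  set q : EuclideanSpace ℝ n → ℝ := fun y => y.ofLp ⬝ᵥ S *ᵥ y.ofLp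
  have hq : Continuous q := by fun_prop
  obtain ⟨α, hα, hmin⟩ := (isCompact_sphere (0 : EuclideanSpace ℝ n) 1).exists_forall_le'
    hq.continuousOn (a := 0) fun y hy => by
      simpa using hS.dotProduct_mulVec_pos (x := y.ofLp)
        (by simpa using ne_zero_of_mem_unit_sphere ⟨y, hy⟩)
  refine ⟨α, hα, fun x => ?_⟩
  rcases eq_or_ne x 0 with rfl | hx
  · simp
  set y := WithLp.toLp 2 x
  have hr : 0 < ‖y‖ := by simpa [y] using hx
  have hy : ‖y‖ ^ 2 = x ⬝ᵥ x := by
    rw [EuclideanSpace.real_norm_sq_eq]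
    simp [y, dotProduct, sq]
  have hunit := hmin (‖y‖⁻¹ • y) (by simp [norm_smul, hr.ne'])
  simp only [q, WithLp.ofLp_smul, mulVec_smul, smul_dotProduct, dotProduct_smul,
    smul_eq_mul] at hunit
  calc α * (x ⬝ᵥ x) ≤ ‖y‖⁻¹ * (‖y‖⁻¹ * (x ⬝ᵥ S *ᵥ x)) * ‖y‖ ^ 2 := by
        rw [← hy]; exact mul_le_mul_of_nonneg_right hunit (sq_nonneg _)
    _ = x ⬝ᵥ S *ᵥ x := by field_simp

theorem exists_pos_mul_dotProduct_self_le_of_posDef_symmPart {K : Matrix n n ℝ}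
    (hK : ((1 / 2 : ℝ) • (K + Kᵀ)).PosDef) :
    ∃ α > 0, ∀ x : n → ℝ, α * (x ⬝ᵥ x) ≤ x ⬝ᵥ K *ᵥ x := by
  simpa only [dotProduct_mulVec_symmPart] using hK.exists_pos_mul_dotProduct_self_le

theorem HasDerivAt.dotProduct_self {u : ℝ → n → ℝ} {u' : n → ℝ} {t : ℝ}
    (hu : HasDerivAt u u' t) : HasDerivAt (fun s => u s ⬝ᵥ u s) (2 * (u t ⬝ᵥ u')) t := by
  have hi : ∀ i ∈ Finset.univ, HasDerivAt (fun s => u s i * u s i) (2 * (u t i * u' i)) t :=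
    fun i _ => ((hasDerivAt_pi.mp hu i).mul (hasDerivAt_pi.mp hu i)).congr_deriv (by ring)
  simpa [dotProduct, Finset.mul_sum] using HasDerivAt.fun_sum hi

/-- The left-hand side is the derivative of `|e_v|² + μ |e_γ|² + |e_β|²` along the error
dynamics, evaluated at `(e_v, e_γ, e_β) = (a, b, c)`. -/
theorem observer_lyapunov_deriv_le {K L M : Matrix n n ℝ} {αK αL αM μ : ℝ} (hαK : 0 < αK)
    (hαM : 0 ≤ αM) (hμ : 0 ≤ μ) (hμα : 1 ≤ μ * (αK * αL))
    (hK : ∀ x, αK * (x ⬝ᵥ x) ≤ x ⬝ᵥ K *ᵥ x) (hL : ∀ x, αL * (x ⬝ᵥ x) ≤ x ⬝ᵥ L *ᵥ x)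
    (hM : ∀ x, αM * (x ⬝ᵥ x) ≤ x ⬝ᵥ M *ᵥ x) (a b c : n → ℝ) :
    2 * (a ⬝ᵥ (b - K *ᵥ a)) + μ * (2 * (b ⬝ᵥ -(L *ᵥ b))) + 2 * (c ⬝ᵥ -(M *ᵥ c)) ≤
      -min (min αK αL) αM * (a ⬝ᵥ a + μ * (b ⬝ᵥ b) + c ⬝ᵥ c) := by
  have hyoung := two_mul_dotProduct_le hαK a b
  have hb : αK⁻¹ * (b ⬝ᵥ b) ≤ μ * αL * (b ⬝ᵥ b) := by
    refine mul_le_mul_of_nonneg_right ?_ (dotProduct_self_nonneg b)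
    rw [inv_le_iff_one_le_mul₀ hαK]
    linarith
  set lam := min (min αK αL) αM
  have hA : lam * (a ⬝ᵥ a) ≤ αK * (a ⬝ᵥ a) := mul_le_mul_of_nonneg_right
    ((min_le_left _ _).trans (min_le_left _ _)) (dotProduct_self_nonneg a)
  have hB : lam * (μ * (b ⬝ᵥ b)) ≤ αL * (μ * (b ⬝ᵥ b)) := mul_le_mul_of_nonneg_right
    ((min_le_left _ _).trans (min_le_right _ _)) (mul_nonneg hμ (dotProduct_self_nonneg b))
  have hC : lam * (c ⬝ᵥ c) ≤ αM * (c ⬝ᵥ c) := mul_le_mul_of_nonneg_right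
    (min_le_right _ _) (dotProduct_self_nonneg c)
  simp only [dotProduct_sub, dotProduct_neg]
  linarith [hK a, mul_le_mul_of_nonneg_left (hL b) hμ, hM c,
    mul_nonneg hαM (dotProduct_self_nonneg c)]

end

theorem HasDerivAt.dotProduct_self_of_eq_cross_add {e : ℝ → Fin 3 → ℝ} {w f : Fin 3 → ℝ}
    {t : ℝ} (he : HasDerivAt e (e t ⨯₃ w + f) t) :
    HasDerivAt (fun s => e s ⬝ᵥ e s) (2 * (e t ⬝ᵥ f)) t := by
  simpa only [dotProduct_add, dot_self_cross, zero_add] using he.dotProduct_self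

theorem le_mul_exp_of_hasDerivAt_le_neg_mul {V V' : ℝ → ℝ} {lam : ℝ}
    (hV : ∀ s, HasDerivAt V (V' s) s) (hdecay : ∀ s, V' s ≤ -lam * V s) {t₀ t : ℝ}
    (ht : t₀ ≤ t) : V t ≤ V t₀ * Real.exp (-lam * (t - t₀)) := by
  rw [← gronwallBound_ε0]
  refine le_gronwallBound_of_liminf_deriv_right_le (f' := V')
    (fun s _ => (hV s).continuousAt.continuousWithinAt)
    (fun s _ r hr => (hV s).hasDerivWithinAt.liminf_right_slope_le hr) le_rfl
    (fun s _ => by simpa using hdecay s) t ⟨ht, le_rfl⟩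

theorem Real.sqrt_le_sqrt_mul_exp_mul_sqrt {x y c lam d : ℝ} (hc : 0 ≤ c)
    (h : x ≤ c * Real.exp (-lam * d) * y) :
    √x ≤ √c * Real.exp (-(lam / 2) * d) * √y := by
  calc √x ≤ √(c * Real.exp (-lam * d) * y) := Real.sqrt_le_sqrt h
    _ = √c * Real.exp (-(lam / 2) * d) * √y := by
      rw [Real.sqrt_mul (by positivity), Real.sqrt_mul hc, ← Real.exp_half]
      ring_nf
theorem observer_error_GES (K L M : Matrix (Fin 3) (Fin 3) ℝ)
    (hK : ((1 / 2 : ℝ) • (K + Kᵀ)).PosDef)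
    (hL : ((1 / 2 : ℝ) • (L + Lᵀ)).PosDef)
    (hM : ((1 / 2 : ℝ) • (M + Mᵀ)).PosDef) :
    ∃ c > 0, ∃ lam > 0, ∀ ω : ℝ → Fin 3 → ℝ, Continuous ω →
      ∀ ev eγ eβ : ℝ → Fin 3 → ℝ,
        (∀ t, HasDerivAt ev (ev t ⨯₃ ω t + eγ t - K *ᵥ ev t) t) →
        (∀ t, HasDerivAt eγ (eγ t ⨯₃ ω t - L *ᵥ eγ t) t) →
        (∀ t, HasDerivAt eβ (eβ t ⨯₃ ω t - M *ᵥ eβ t) t) →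
        ∀ t₀ t, t₀ ≤ t →
          Real.sqrt (ev t ⬝ᵥ ev t + eγ t ⬝ᵥ eγ t + eβ t ⬝ᵥ eβ t) ≤
            c * Real.exp (-lam * (t - t₀)) *
              Real.sqrt (ev t₀ ⬝ᵥ ev t₀ + eγ t₀ ⬝ᵥ eγ t₀ + eβ t₀ ⬝ᵥ eβ t₀) := by
  obtain ⟨αK, hαK, hKx⟩ := exists_pos_mul_dotProduct_self_le_of_posDef_symmPart hK
  obtain ⟨αL, hαL, hLx⟩ := exists_pos_mul_dotProduct_self_le_of_posDef_symmPart hL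
  obtain ⟨αM, hαM, hMx⟩ := exists_pos_mul_dotProduct_self_le_of_posDef_symmPart hM
  set μ := 1 + (αK * αL)⁻¹
  have hμα : 1 ≤ μ * (αK * αL) := by
    rw [add_mul, inv_mul_cancel₀ (by positivity)]
    linarith [mul_pos hαK hαL]
  have hμ : 1 ≤ μ := le_add_of_nonneg_right (by positivity)
  refine ⟨√μ, by positivity, min (min αK αL) αM / 2, by positivity,
    fun ω _ ev eγ eβ hev heγ heβ t₀ t ht => Real.sqrt_le_sqrt_mul_exp_mul_sqrt (by positivity) ?_⟩
  set V := fun s => ev s ⬝ᵥ ev s + μ * (eγ s ⬝ᵥ eγ s) + eβ s ⬝ᵥ eβ s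
  have hV : ∀ s, HasDerivAt V (2 * (ev s ⬝ᵥ (eγ s - K *ᵥ ev s)) + μ * (2 * (eγ s ⬝ᵥ -(L *ᵥ eγ s)))
      + 2 * (eβ s ⬝ᵥ -(M *ᵥ eβ s))) s := fun s =>
    (((hev s).congr_deriv (add_sub_assoc ..)).dotProduct_self_of_eq_cross_add.add
      (((heγ s).congr_deriv (sub_eq_add_neg ..)).dotProduct_self_of_eq_cross_add.const_mul μ)).add
      ((heβ s).congr_deriv (sub_eq_add_neg ..)).dotProduct_self_of_eq_cross_add
  have hdecay := le_mul_exp_of_hasDerivAt_le_neg_mul hV (fun s => observer_lyapunov_deriv_le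
    hαK hαM.le (by positivity) hμα hKx hLx hMx (ev s) (eγ s) (eβ s)) ht
  have hN : ∀ s, ev s ⬝ᵥ ev s + eγ s ⬝ᵥ eγ s + eβ s ⬝ᵥ eβ s ≤ V s := fun s => by
    nlinarith [dotProduct_self_nonneg (eγ s)]
  have hNV : ∀ s, V s ≤ μ * (ev s ⬝ᵥ ev s + eγ s ⬝ᵥ eγ s + eβ s ⬝ᵥ eβ s) := fun s => by
    nlinarith [dotProduct_self_nonneg (ev s), dotProduct_self_nonneg (eβ s)]
  calc _ ≤ V t₀ * Real.exp (-min (min αK αL) αM * (t - t₀)) := (hN t).trans hdecay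
    _ ≤ _ := by rw [mul_right_comm μ]; gcongr; exact hNV t₀
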